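/- The maximum construction cost of the friendship graph F_n is ν*(F_n) = 17n² + n for all n ≥ 1. -/

import Mathlib

/-!
Writing `pos` for positions in a construction sequence `x`, an edge `uw` costs
`2 pos(uw) - pos u - pos w`, so `ν(x) + ∑ᵥ deg v · pos v = 2 ∑ₑ pos e`. All positions together
sum to `C(p+q, 2)`, and the `p` distinct vertex positions sum to at least `C(p, 2)`; hence, if
every degree is at least `δ`, `ν(x) + (δ + 2) C(p, 2) ≤ 2 C(p+q, 2)`. Equality holds when the
vertices are listed first, beginning with the one vertex whose degree may exceed `δ`. For `F_n`
this vertex is the hub, `δ = 2`, `p = 2n + 1` and `q = 3n`, so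
`ν*(F_n) = (5n+1)·5n - 4n(2n+1) = 17n² + n`.
-/

namespace ConsCost

variable {V : Type*} [Fintype V]

/-- The number of elements (vertices plus edges) of a graph. -/
noncomputable def numElts (G : SimpleGraph V) : ℕ :=
  Fintype.card V + Nat.card G.edgeSet

/-- `x` is a construction sequence for `G`: a bijective listing of the vertices and
edges of `G` in which every edge appears after both of its endpoints. -/
def IsCSeq (G : SimpleGraph V) (x : Fin (numElts G) ≃ V ⊕ G.edgeSet) : Prop :=
  ∀ (e : G.edgeSet), ∀ v ∈ (e : Sym2 V), x.symm (Sum.inl v) < x.symm (Sum.inr e)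

/-- The cost `ν(e,x) = (x⁻¹e − x⁻¹u) + (x⁻¹e − x⁻¹w)` of an edge `e = uw`
in the construction sequence `x`. -/
noncomputable def edgeCost (G : SimpleGraph V) (x : Fin (numElts G) ≃ V ⊕ G.edgeSet)
    (e : G.edgeSet) : ℕ :=
  2 * (x.symm (Sum.inr e) : ℕ) -
    Sym2.lift ⟨fun u w => ((x.symm (Sum.inl u) : ℕ) + (x.symm (Sum.inl w) : ℕ)),
      fun u w => by dsimp only; omega⟩ (e : Sym2 V)

/-- The cost `ν(x)` of a construction sequence: the sum of the costs of all edges. -/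
noncomputable def cost (G : SimpleGraph V) (x : Fin (numElts G) ≃ V ⊕ G.edgeSet) : ℕ :=
  ∑ᶠ e : G.edgeSet, edgeCost G x e

/-- The maximum construction cost `ν*(G)`. -/
noncomputable def maxCost (G : SimpleGraph V) : ℕ :=
  sSup {c | ∃ x, IsCSeq G x ∧ cost G x = c}

/-- The minimum construction cost `ν_*(G)`. -/
noncomputable def minCost (G : SimpleGraph V) : ℕ :=
  sInf {c | ∃ x, IsCSeq G x ∧ cost G x = c}
/-- The friendship graph `F_n`: `n` triangles sharing a single common vertex
(the hub `Sum.inl ()`); the `i`-th triangle has outer vertices `(i, 0)` and `(i, 1)`. -/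
def friendshipGraph (n : ℕ) : SimpleGraph (Unit ⊕ Fin n × Fin 2) :=
  SimpleGraph.fromRel (fun a b =>
    a = Sum.inl () ∨ ∃ (i : Fin n) (s t : Fin 2), a = Sum.inr (i, s) ∧ b = Sum.inr (i, t))

open Finset

section Positions

variable {α : Type*} {N : ℕ}

def pos (x : Fin N ≃ α) (a : α) : ℕ := x.symm a

theorem pos_injective (x : Fin N ≃ α) : Function.Injective (pos x) :=
  fun _ _ h => x.symm.injective (Fin.val_injective h)

theorem sum_pos [Fintype α] (x : Fin N ≃ α) : ∑ a, pos x a = N.choose 2 := by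
  simp only [← Equiv.sum_comp x, pos, Equiv.symm_apply_apply]
  rw [Fin.sum_univ_eq_sum_range (fun j => j), sum_range_id, Nat.choose_two_right]

theorem sum_pos_inl_add_sum_pos_inr {β : Type*} [Fintype α] [Fintype β] (x : Fin N ≃ α ⊕ β) :
    ∑ a, pos x (.inl a) + ∑ b, pos x (.inr b) = N.choose 2 := by
  rw [← Fintype.sum_sum_type, sum_pos]

end Positions

theorem _root_.Nat.two_mul_choose_two (m : ℕ) : 2 * m.choose 2 = m * (m - 1) := by
  rw [Nat.choose_two_right, Nat.mul_div_cancel' (Nat.even_mul_pred_self m).two_dvd]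

theorem _root_.Finset.choose_two_card_le_sum (s : Finset ℕ) : (#s).choose 2 ≤ ∑ i ∈ s, i := by
  induction s using Finset.induction_on_max with
  | empty => simp
  | insert a s hlt ih =>
    have has : a ∉ s := fun h => lt_irrefl a (hlt a h)
    have hcard : #s ≤ a := by
      simpa using card_le_card (fun i hi => mem_range.2 (hlt i hi) : s ⊆ range a)
    have hsucc : (#s + 1).choose 2 = #s + (#s).choose 2 := by
      simpa using Nat.choose_succ_succ' (#s) 1
    rw [card_insert_of_notMem has, sum_insert has, hsucc]
    omega

theorem choose_two_card_le_sum_of_injective {α : Type*} [Fintype α] {f : α → ℕ}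
    (hf : Function.Injective f) : (Fintype.card α).choose 2 ≤ ∑ a, f a := by
  classical
  simpa [card_image_of_injective _ hf, sum_image fun a _ b _ h => hf h] using
    (univ.image f).choose_two_card_le_sum

def endpointSum {V : Type*} (f : V → ℕ) : Sym2 V → ℕ :=
  Sym2.lift ⟨fun u w => f u + f w, fun _ _ => add_comm _ _⟩

@[simp]
theorem endpointSum_mk {V : Type*} (f : V → ℕ) (u w : V) : endpointSum f s(u, w) = f u + f w :=
  rfl

theorem sum_ite_mem_eq_endpointSum [DecidableEq V] (f : V → ℕ) {e : Sym2 V} (he : ¬e.IsDiag) :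
    ∑ v, (if v ∈ e then f v else 0) = endpointSum f e := by
  induction e using Sym2.ind with
  | _ u w =>
    have huw : u ≠ w := by simpa using he
    rw [← sum_filter, show ({v | v ∈ s(u, w)} : Finset V) = {u, w} by ext; simp,
      sum_pair huw, endpointSum_mk]

section Graph

variable [DecidableEq V] (G : SimpleGraph V) [DecidableRel G.Adj]

theorem sum_degree_mul_eq_sum_endpointSum (f : V → ℕ) :
    ∑ v, G.degree v * f v = ∑ e : G.edgeSet, endpointSum f e := by
  calc ∑ v, G.degree v * f v
      = ∑ v, ∑ e ∈ G.edgeFinset, if v ∈ e then f v else 0 := by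
        refine sum_congr rfl fun v _ => ?_
        rw [← sum_filter, sum_const, smul_eq_mul, ← G.incidenceFinset_eq_filter,
          G.card_incidenceFinset_eq_degree]
    _ = ∑ e ∈ G.edgeFinset, endpointSum f e := by
        rw [sum_comm]
        exact sum_congr rfl fun e he =>
          sum_ite_mem_eq_endpointSum f (G.not_isDiag_of_mem_edgeSet (G.mem_edgeFinset.1 he))
    _ = ∑ e : G.edgeSet, endpointSum f e := (sum_set_coe _).symm

end Graph

section Cost

variable {G : SimpleGraph V} {x : Fin (numElts G) ≃ V ⊕ G.edgeSet}

theorem edgeCost_add_endpointSum (hx : IsCSeq G x) (e : G.edgeSet) :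
    edgeCost G x e + endpointSum (fun v => pos x (.inl v)) e = 2 * pos x (.inr e) := by
  obtain ⟨e, he⟩ := e
  induction e using Sym2.ind with
  | _ u w =>
    have hu := Fin.lt_def.1 (hx ⟨s(u, w), he⟩ u (Sym2.mem_mk_left u w))
    have hw := Fin.lt_def.1 (hx ⟨s(u, w), he⟩ w (Sym2.mem_mk_right u w))
    simp only [edgeCost, Sym2.lift_mk, endpointSum_mk, pos]
    omega

theorem cost_add_sum_degree_mul_pos [DecidableEq V] [DecidableRel G.Adj] (hx : IsCSeq G x) :
    cost G x + ∑ v, G.degree v * pos x (.inl v) = 2 * ∑ e : G.edgeSet, pos x (.inr e) := by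
  rw [cost, finsum_eq_sum_of_fintype, sum_degree_mul_eq_sum_endpointSum, ← sum_add_distrib,
    mul_sum]
  exact sum_congr rfl fun e _ => edgeCost_add_endpointSum hx e

theorem cost_add_le_of_forall_le_degree [DecidableRel G.Adj] {δ : ℕ} (hδ : ∀ v, δ ≤ G.degree v)
    (hx : IsCSeq G x) :
    cost G x + (δ + 2) * (Fintype.card V).choose 2 ≤ 2 * (numElts G).choose 2 := by
  classical
  have hcost := cost_add_sum_degree_mul_pos hx
  have htotal := sum_pos_inl_add_sum_pos_inr x
  have hdeg : δ * ∑ v, pos x (.inl v) ≤ ∑ v, G.degree v * pos x (.inl v) := by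
    rw [mul_sum]
    exact sum_le_sum fun v _ => Nat.mul_le_mul_right _ (hδ v)
  have hvert : (Fintype.card V).choose 2 ≤ ∑ v, pos x (.inl v) :=
    choose_two_card_le_sum_of_injective ((pos_injective x).comp Sum.inl_injective)
  nlinarith

end Cost

noncomputable def verticesFirst (G : SimpleGraph V) (σ : V ≃ Fin (Fintype.card V)) :
    Fin (numElts G) ≃ V ⊕ G.edgeSet :=
  finSumFinEquiv.symm.trans (Equiv.sumCongr σ.symm (Finite.equivFin G.edgeSet).symm)

section VerticesFirst

variable {G : SimpleGraph V} (σ : V ≃ Fin (Fintype.card V))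

theorem pos_verticesFirst_inl (v : V) : pos (verticesFirst G σ) (.inl v) = σ v :=
  rfl

theorem pos_verticesFirst_inr (e : G.edgeSet) :
    pos (verticesFirst G σ) (.inr e) = Fintype.card V + Finite.equivFin G.edgeSet e :=
  rfl

theorem isCSeq_verticesFirst : IsCSeq G (verticesFirst G σ) := fun e v _ =>
  Fin.lt_def.2 <| by
    have hv := pos_verticesFirst_inl (G := G) σ v
    have he := pos_verticesFirst_inr σ e
    simp only [pos] at hv he
    omega

theorem cost_verticesFirst_add_eq [DecidableRel G.Adj] {δ : ℕ} {v₀ : V}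
    (hδ : ∀ v ≠ v₀, G.degree v = δ) (hσ : σ v₀ = ⟨0, Fintype.card_pos_iff.2 ⟨v₀⟩⟩) :
    cost G (verticesFirst G σ) + (δ + 2) * (Fintype.card V).choose 2 =
      2 * (numElts G).choose 2 := by
  classical
  have hcost := cost_add_sum_degree_mul_pos (isCSeq_verticesFirst (G := G) σ)
  have htotal := sum_pos_inl_add_sum_pos_inr (verticesFirst G σ)
  have hvert : ∑ v, pos (verticesFirst G σ) (.inl v) = (Fintype.card V).choose 2 := by
    simp only [pos_verticesFirst_inl]
    simpa [pos] using sum_pos σ.symm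
  have hdeg : ∑ v, G.degree v * pos (verticesFirst G σ) (.inl v) =
      δ * ∑ v, pos (verticesFirst G σ) (.inl v) := by
    rw [mul_sum]
    refine sum_congr rfl fun v _ => ?_
    by_cases hv : v = v₀
    · simp [hv, pos_verticesFirst_inl, hσ]
    · rw [hδ v hv]
  nlinarith

end VerticesFirst

theorem maxCost_add_mul_choose_two_eq {G : SimpleGraph V} [DecidableRel G.Adj] {δ : ℕ} {v₀ : V}
    (h₀ : δ ≤ G.degree v₀) (hδ : ∀ v ≠ v₀, G.degree v = δ) :
    maxCost G + (δ + 2) * (Fintype.card V).choose 2 = 2 * (numElts G).choose 2 := by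
  obtain ⟨σ, hσ⟩ : ∃ σ : V ≃ Fin (Fintype.card V),
      σ v₀ = ⟨0, Fintype.card_pos_iff.2 ⟨v₀⟩⟩ :=
    ⟨(Fintype.equivFin V).trans (Equiv.swap _ _), Equiv.swap_apply_left _ _⟩
  have hσcost := cost_verticesFirst_add_eq σ hδ hσ
  have hmin : ∀ v, δ ≤ G.degree v := fun v => by
    by_cases hv : v = v₀
    · exact hv ▸ h₀
    · exact (hδ v hv).ge
  have hgreatest : IsGreatest {c | ∃ x, IsCSeq G x ∧ cost G x = c}
      (cost G (verticesFirst G σ)) := by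
    refine ⟨⟨_, isCSeq_verticesFirst σ, rfl⟩, ?_⟩
    rintro _ ⟨x, hx, rfl⟩
    have := cost_add_le_of_forall_le_degree hmin hx
    omega
  rw [maxCost, hgreatest.csSup_eq, hσcost]

section Friendship

variable {n : ℕ}

theorem friendshipGraph_adj_inl_inr (p : Fin n × Fin 2) :
    (friendshipGraph n).Adj (.inl ()) (.inr p) := by
  simp [friendshipGraph]

theorem friendshipGraph_adj_inr_inr {i j : Fin n} {s t : Fin 2} :
    (friendshipGraph n).Adj (.inr (i, s)) (.inr (j, t)) ↔ i = j ∧ s ≠ t := by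
  simp only [friendshipGraph, SimpleGraph.fromRel_adj, ne_eq, Sum.inr.injEq, Prod.mk.injEq,
    reduceCtorEq, false_or]
  constructor
  · rintro ⟨hne, ⟨k, a, b, ⟨rfl, rfl⟩, rfl, rfl⟩ | ⟨k, a, b, ⟨rfl, rfl⟩, rfl, rfl⟩⟩ <;> simp_all
  · rintro ⟨rfl, hst⟩
    exact ⟨by simpa using hst, .inl ⟨i, s, t, ⟨rfl, rfl⟩, rfl, rfl⟩⟩

theorem friendshipGraph_isUniversal : (friendshipGraph n).IsUniversal (.inl ()) := by
  rintro (⟨⟩ | p) h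
  · exact absurd rfl h
  · exact friendshipGraph_adj_inl_inr p

theorem card_friendshipGraph_vertices : Fintype.card (Unit ⊕ Fin n × Fin 2) = 2 * n + 1 := by
  simp [Fintype.card_sum]
  ring

theorem friendshipGraph_degree_inl [DecidableRel (friendshipGraph n).Adj] :
    (friendshipGraph n).degree (.inl ()) = 2 * n := by
  rw [(SimpleGraph.degree_eq_card_sub_one _ _).2 friendshipGraph_isUniversal,
    card_friendshipGraph_vertices, Nat.add_sub_cancel]

theorem friendshipGraph_degree_inr [DecidableRel (friendshipGraph n).Adj] (i : Fin n)
    (s : Fin 2) : (friendshipGraph n).degree (.inr (i, s)) = 2 := by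
  rw [← SimpleGraph.card_neighborFinset_eq_degree,
    show (friendshipGraph n).neighborFinset (.inr (i, s)) = {.inl (), .inr (i, s.rev)} by
      ext (⟨⟩ | ⟨j, t⟩)
      · simpa using (friendshipGraph_adj_inl_inr (i, s)).symm
      · simp only [SimpleGraph.mem_neighborFinset, friendshipGraph_adj_inr_inr, mem_insert,
          mem_singleton, reduceCtorEq, Sum.inr.injEq, Prod.mk.injEq, false_or]
        fin_cases s <;> fin_cases t <;> simp [eq_comm]]
  simp

theorem card_friendshipGraph_edgeSet : Nat.card (friendshipGraph n).edgeSet = 3 * n := by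
  classical
  have h := (friendshipGraph n).sum_degrees_eq_twice_card_edges
  simp [Fintype.sum_sum_type, Fintype.sum_prod_type, friendshipGraph_degree_inl,
    friendshipGraph_degree_inr] at h
  rw [Nat.card_eq_fintype_card, ← SimpleGraph.edgeFinset_card]
  omega

theorem numElts_friendshipGraph : numElts (friendshipGraph n) = 5 * n + 1 := by
  rw [numElts, card_friendshipGraph_vertices, card_friendshipGraph_edgeSet]
  ring

end Friendship

/-- `ν*(F_n) = 17n² + n` for `n ≥ 1`. -/
theorem maxCost_friendship (n : ℕ) (hn : 1 ≤ n) :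
    maxCost (friendshipGraph n) = 17 * n ^ 2 + n := by
  classical
  have h := maxCost_add_mul_choose_two_eq (G := friendshipGraph n) (δ := 2) (v₀ := .inl ())
    (by rw [friendshipGraph_degree_inl]; omega)
    (by rintro (⟨⟩ | ⟨i, s⟩) hv
        · exact absurd rfl hv
        · exact friendshipGraph_degree_inr i s)
  have hv := Nat.two_mul_choose_two (2 * n + 1)
  have hN := Nat.two_mul_choose_two (5 * n + 1)
  rw [card_friendshipGraph_vertices, numElts_friendshipGraph] at h
  simp only [Nat.add_sub_cancel] at hv hN
  nlinarith

end ConsCost
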